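/- (Incremental learning under small spectral initialization.) Let Y be a real symmetric positive semi-definite n×n matrix with eigendecomposition Y = Φ Σ_Y Φᵀ, Φ orthogonal, Σ_Y = diag(σ_{1,Y}, …, σ_{n,Y}), whose K non-zero eigenvalues σ_{1,Y} > σ_{2,Y} > ⋯ > σ_{K,Y} > 0 are distinct and listed in decreasing order (σ_{i,Y} = 0 for i > K). Let the initialization be W(0) = α Φ Σ_{U₀}² Φᵀ with Σ_{U₀}² = diag(σ_{1,0}, …, σ_{n,0}), σ_{i,0} ≥ 0 for all i and σ_{i,0} > 0 for 1 ≤ i ≤ K, and let W(t) be the unique solution of Ẇ = WY + YW − 2W² from this initialization. Given an error tolerance 0 < ε ≤ σ_{K,Y}, set c_ε = ε / max_i σ_{i,0} and C_ε = σ_{1,Y}² / (ε · min_{1 ≤ i ≤ K} σ_{i,0}). Suppose α ≤ c_ε and (−log α + log c_ε)/(−log α + log C_ε) > max_{1 ≤ k ≤ K−1} σ_{k+1,Y}/σ_{k,Y}. Then for each 1 ≤ k ≤ K the interval I_k = [ (1/(2σ_{k,Y})) log(C_ε/α), (1/(2σ_{k+1,Y})) log(c_ε/α) ] (with 1/σ_{K+1,Y}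 := ∞) is non-empty, and for every t ∈ I_k, ‖W(t) − Ŷ_k‖ ≤ ε, where Ŷ_k = Φ diag(σ_{1,Y}, …, σ_{k,Y}, 0, …, 0) Φᵀ is the best rank-k approximation of Y and ‖·‖ denotes the spectral norm. -/

import Mathlib

/-!
Because `W(0)` and `Y` are both diagonal in the orthonormal basis `Φ`, the flow stays diagonal
in that basis: `W(t) = Φ diag(w(t)) Φᵀ`, where each eigenvalue solves the logistic equation
`ẇᵢ = 2 dᵢ wᵢ - 2 wᵢ²`. This ansatz is an explicit solution, and the vector field
`M ↦ MY + YM - 2M²` is locally Lipschitz, so it is the solution. The explicit formula gives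
`0 ≤ dᵢ - wᵢ(t) ≤ dᵢ² / (wᵢ(0) e^{2 dᵢ t})` when `0 < wᵢ(0) ≤ dᵢ`, and `wᵢ(t) ≤ wᵢ(0) e^{2 dᵢ t}`
always. After time `log(C_ε/α) / (2 d_k)` the first bound puts the top modes within `ε` of `dᵢ`;
before time `log(c_ε/α) / (2 d_{k+1})` the second keeps the other modes below `ε`. Finally
`‖Φ diag(v) Φᵀ‖ = maxᵢ |vᵢ|`.
-/

open scoped Matrix.Norms.L2Operator
open scoped Matrix

open Real Set Matrix

def riccatiField {A : Type*} [Ring A] (Y M : A) : A := M * Y + Y * M - 2 * (M * M)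

lemma map_riccatiField {A B F : Type*} [Ring A] [Ring B] [FunLike F A B] [RingHomClass F A B]
    (ψ : F) (Y M : A) : ψ (riccatiField Y M) = riccatiField (ψ Y) (ψ M) := by
  simp [riccatiField, map_ofNat]

lemma contDiff_riccatiField {A : Type*} [NormedRing A] [NormedAlgebra ℝ A] (Y : A) :
    ContDiff ℝ 1 (riccatiField Y) := by
  unfold riccatiField
  fun_prop

lemma HasDerivAt.riccatiField_map {A B : Type*} [NormedRing A] [NormedAlgebra ℝ A]
    [FiniteDimensional ℝ A] [NormedRing B] [NormedAlgebra ℝ B] (ψ : A →ₐ[ℝ] B) {w : ℝ → A}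
    {Y : A} {t : ℝ} (hw : HasDerivAt w (riccatiField Y (w t)) t) :
    HasDerivAt (fun s => ψ (w s)) (riccatiField (ψ Y) (ψ (w t))) t := by
  rw [← map_riccatiField]
  exact (LinearMap.toContinuousLinearMap ψ.toLinearMap).hasFDerivAt.comp_hasDerivAt t hw

theorem ODE_solution_unique_Ici_of_locallyLipschitz {E : Type*} [NormedAddCommGroup E]
    [NormedSpace ℝ E] {v : E → E} (hv : LocallyLipschitz v) {f g : ℝ → E} {a : ℝ}
    (hf : ∀ t ∈ Ici a, HasDerivWithinAt f (v (f t)) (Ici a) t)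
    (hg : ∀ t ∈ Ici a, HasDerivWithinAt g (v (g t)) (Ici a) t)
    (ha : f a = g a) : EqOn f g (Ici a) := by
  intro b hb
  have hcont {h : ℝ → E} (hh : ∀ t ∈ Ici a, HasDerivWithinAt h (v (h t)) (Ici a) t) :
      ContinuousOn h (Icc a b) := fun t ht =>
    (hh t ht.1).continuousWithinAt.mono Icc_subset_Ici_self
  have hderiv {h : ℝ → E} (hh : ∀ t ∈ Ici a, HasDerivWithinAt h (v (h t)) (Ici a) t) :
      ∀ t ∈ Ico a b, HasDerivWithinAt h (v (h t)) (Ici t) t := fun t ht =>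
    (hh t ht.1).mono (Ici_subset_Ici.2 ht.1)
  -- both trajectories stay in this compact set, on which `v` is Lipschitz
  have hK : IsCompact (f '' Icc a b ∪ g '' Icc a b) :=
    (isCompact_Icc.image_of_continuousOn (hcont hf)).union
      (isCompact_Icc.image_of_continuousOn (hcont hg))
  obtain ⟨L, hL⟩ := hv.locallyLipschitzOn.exists_lipschitzOnWith_of_compact hK
  exact ODE_solution_unique_of_mem_Icc_right (v := fun _ => v) (fun _ _ => hL)
    (hcont hf) (hderiv hf) (fun t ht => .inl ⟨t, Ico_subset_Icc_self ht, rfl⟩)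
    (hcont hg) (hderiv hg) (fun t ht => .inr ⟨t, Ico_subset_Icc_self ht, rfl⟩) ha
    ⟨hb, le_rfl⟩

noncomputable def logisticGrowth (d t : ℝ) : ℝ := ∫ s in (0)..t, 2 * exp (2 * d * s)

/-- The solution of `ẇ = 2 d w - 2 w²`, `w 0 = x`; writing the denominator as an integral
avoids a separate formula for `d = 0`. -/
noncomputable def logisticSol (d x t : ℝ) : ℝ :=
  x * exp (2 * d * t) / (1 + x * logisticGrowth d t)

@[simp]
lemma logisticGrowth_zero (d : ℝ) : logisticGrowth d 0 = 0 := intervalIntegral.integral_same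

lemma hasDerivAt_logisticGrowth (d t : ℝ) :
    HasDerivAt (logisticGrowth d) (2 * exp (2 * d * t)) t :=
  ((by fun_prop : Continuous fun s => 2 * exp (2 * d * s)).integral_hasStrictDerivAt
    0 t).hasDerivAt

lemma logisticGrowth_nonneg (d : ℝ) {t : ℝ} (ht : 0 ≤ t) : 0 ≤ logisticGrowth d t :=
  intervalIntegral.integral_nonneg ht fun _ _ => by positivity

lemma mul_logisticGrowth (d t : ℝ) : d * logisticGrowth d t = exp (2 * d * t) - 1 := by
  have hderiv (s : ℝ) : HasDerivAt (fun s => exp (2 * d * s)) (d * (2 * exp (2 * d * s))) s := by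
    convert ((hasDerivAt_id' s).const_mul (2 * d)).exp using 1
    ring
  rw [logisticGrowth, ← intervalIntegral.integral_const_mul,
    intervalIntegral.integral_eq_sub_of_hasDerivAt (fun s _ => hderiv s)
      (by apply Continuous.intervalIntegrable; fun_prop)]
  simp

lemma one_add_mul_logisticGrowth_pos {x : ℝ} (hx : 0 ≤ x) (d : ℝ) {t : ℝ} (ht : 0 ≤ t) :
    0 < 1 + x * logisticGrowth d t := by
  have := mul_nonneg hx (logisticGrowth_nonneg d ht)
  linarith

@[simp]
lemma logisticSol_zero (d x : ℝ) : logisticSol d x 0 = x := by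
  simp [logisticSol]

lemma hasDerivAt_logisticSol (d : ℝ) {x t : ℝ} (hx : 0 ≤ x) (ht : 0 ≤ t) :
    HasDerivAt (logisticSol d x) (riccatiField d (logisticSol d x t)) t := by
  have hden := (one_add_mul_logisticGrowth_pos hx d ht).ne'
  have hE : HasDerivAt (fun s => exp (2 * d * s)) (exp (2 * d * t) * (2 * d)) t := by
    simpa using ((hasDerivAt_id t).const_mul (2 * d)).exp
  refine ((hE.const_mul x).div ((hasDerivAt_logisticGrowth d t).const_mul x |>.const_add 1)
    hden).congr_deriv ?_
  simp only [logisticSol, riccatiField]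
  field_simp
  ring

lemma logisticSol_nonneg (d : ℝ) {x t : ℝ} (hx : 0 ≤ x) (ht : 0 ≤ t) : 0 ≤ logisticSol d x t :=
  div_nonneg (by positivity) (one_add_mul_logisticGrowth_pos hx d ht).le

lemma logisticSol_le (d : ℝ) {x t : ℝ} (hx : 0 ≤ x) (ht : 0 ≤ t) :
    logisticSol d x t ≤ x * exp (2 * d * t) :=
  div_le_self (by positivity) (by nlinarith [mul_nonneg hx (logisticGrowth_nonneg d ht)])

lemma sub_logisticSol {d x t : ℝ} (hx : 0 ≤ x) (ht : 0 ≤ t) :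
    d - logisticSol d x t = (d - x) / (1 + x * logisticGrowth d t) := by
  have hden := (one_add_mul_logisticGrowth_pos hx d ht).ne'
  rw [logisticSol, eq_div_iff hden, sub_mul, div_mul_cancel₀ _ hden]
  linear_combination x * mul_logisticGrowth d t

lemma abs_logisticSol_le {d x t ε : ℝ} (hx : 0 ≤ x) (ht : 0 ≤ t)
    (hsmall : x * exp (2 * d * t) ≤ ε) : |logisticSol d x t| ≤ ε := by
  rw [abs_of_nonneg (logisticSol_nonneg d hx ht)]
  exact (logisticSol_le d hx ht).trans hsmall

lemma abs_logisticSol_sub_le {d x t ε : ℝ} (hx : 0 < x) (hxd : x ≤ d) (ht : 0 ≤ t)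
    (hlarge : d ^ 2 ≤ ε * (x * exp (2 * d * t))) : |logisticSol d x t - d| ≤ ε := by
  have hden := one_add_mul_logisticGrowth_pos hx.le d ht
  rw [abs_sub_comm, sub_logisticSol hx.le ht, abs_of_nonneg (div_nonneg (by linarith) hden.le),
    div_le_iff₀ hden]
  have hd : 0 < d := hx.trans_le hxd
  have hε : 0 ≤ ε := by
    by_contra! h
    nlinarith [mul_pos hx (exp_pos (2 * d * t))]
  refine le_of_mul_le_mul_left ?_ hd
  calc d * (d - x) ≤ d ^ 2 := by nlinarith
    _ ≤ ε * (x * exp (2 * d * t)) := hlarge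
    _ ≤ ε * (d - x + x * exp (2 * d * t)) := by nlinarith [mul_nonneg hε (sub_nonneg.2 hxd)]
    _ = d * (ε * (1 + x * logisticGrowth d t)) := by
      linear_combination -(ε * x) * mul_logisticGrowth d t

section ConjDiagonal

variable {ι : Type*} [Fintype ι] [DecidableEq ι] {U : Matrix ι ι ℝ}

lemma Matrix.l2_opNorm_conj_diagonal (hU : U ∈ unitaryGroup ι ℝ) (v : ι → ℝ) :
    ‖U * diagonal v * Uᵀ‖ = ‖v‖ := by
  rw [CStarRing.norm_mul_mem_unitary _ (transpose_mem_unitaryGroup_iff.2 hU),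
    CStarRing.norm_mem_unitary_mul _ hU, l2_opNorm_diagonal]

lemma Matrix.norm_conj_diagonal_sub_le (hU : U ∈ unitaryGroup ι ℝ) {a b : ι → ℝ} {ε : ℝ}
    (hε : 0 ≤ ε) (h : ∀ i, |a i - b i| ≤ ε) :
    ‖U * diagonal a * Uᵀ - U * diagonal b * Uᵀ‖ ≤ ε := by
  rw [← Matrix.sub_mul, ← Matrix.mul_sub, diagonal_sub, l2_opNorm_conj_diagonal hU,
    pi_norm_le_iff_of_nonneg hε]
  simpa using h

lemma HasDerivAt.conj_diagonal_riccatiField (hU : U ∈ unitaryGroup ι ℝ) {w : ℝ → ι → ℝ}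
    {d : ι → ℝ} {t : ℝ} (hw : HasDerivAt w (riccatiField d (w t)) t) :
    HasDerivAt (fun s => U * diagonal (w s) * Uᵀ)
      (riccatiField (U * diagonal d * Uᵀ) (U * diagonal (w t) * Uᵀ)) t := by
  simpa [star_eq_conjTranspose] using
    hw.riccatiField_map ((AlgHomClass.toAlgHom (Unitary.conjStarAlgAut ℝ _ ⟨U, hU⟩)).comp
      (diagonalAlgHom ℝ))

theorem eqOn_conj_diagonal_logisticSol (hU : U ∈ unitaryGroup ι ℝ) {d x : ι → ℝ}
    (hx : ∀ i, 0 ≤ x i) {W : ℝ → Matrix ι ι ℝ} (hW0 : W 0 = U * diagonal x * Uᵀ)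
    (hW : ∀ t ∈ Ici 0, HasDerivWithinAt W (riccatiField (U * diagonal d * Uᵀ) (W t)) (Ici 0) t) :
    EqOn W (fun t => U * diagonal (fun i => logisticSol (d i) (x i) t) * Uᵀ) (Ici 0) := by
  refine ODE_solution_unique_Ici_of_locallyLipschitz (contDiff_riccatiField _).locallyLipschitz
    hW (fun t ht => ?_) (by simpa using hW0)
  refine (HasDerivAt.conj_diagonal_riccatiField hU (hasDerivAt_pi.2 fun i => ?_)).hasDerivWithinAt
  exact hasDerivAt_logisticSol (d i) (hx i) ht

/-- The modes in `p` grow at rate at least `ρ₁` and those outside at rate at most `ρ₂`; the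
two conditions on `t` say that the former have been learned and the latter not yet. -/
theorem norm_conj_logisticSol_sub_le (hU : U ∈ unitaryGroup ι ℝ) {d σ : ι → ℝ}
    (p : ι → Prop) [DecidablePred p] {α ε m D ρ₁ ρ₂ cε Cε t : ℝ} (hα : 0 < α) (hε : 0 < ε)
    (hm : 0 < m) (ht : 0 ≤ t) (hσ : ∀ i, 0 ≤ σ i)
    (hp : ∀ i, p i → m ≤ σ i ∧ ε ≤ d i ∧ ρ₁ ≤ d i ∧ d i ≤ D) (hnp : ∀ i, ¬p i → d i ≤ ρ₂)
    (hcε : cε = ε / ⨆ i, σ i) (hCε : Cε = D ^ 2 / (ε * m)) (hαcε : α ≤ cε)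
    (hleft : log (Cε / α) ≤ 2 * ρ₁ * t) (hright : 2 * ρ₂ * t ≤ log (cε / α)) :
    ‖U * diagonal (fun i => logisticSol (d i) (α * σ i) t) * Uᵀ
      - U * diagonal (fun i => if p i then d i else 0) * Uᵀ‖ ≤ ε := by
  have hS : ∀ i, σ i ≤ ⨆ j, σ j := le_ciSup (Finite.bddAbove_range σ)
  have hS0 : 0 < ⨆ i, σ i := (div_pos_iff_of_pos_left hε).1 (hcε ▸ hα.trans_le hαcε)
  have hαS : α * ⨆ i, σ i ≤ ε := by
    rw [hcε, le_div_iff₀ hS0] at hαcε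
    exact hαcε
  refine norm_conj_diagonal_sub_le hU hε.le fun i => ?_
  by_cases hi : p i
  · obtain ⟨hmσ, hεd, hρd, hdD⟩ := hp i hi
    have hσS : α * σ i ≤ α * ⨆ j, σ j := mul_le_mul_of_nonneg_left (hS i) hα.le
    rw [if_pos hi]
    refine abs_logisticSol_sub_le (mul_pos hα (hm.trans_le hmσ)) (by linarith) ht ?_
    calc d i ^ 2 ≤ D ^ 2 := pow_le_pow_left₀ (hε.le.trans hεd) hdD 2
      _ = ε * (α * m * (Cε / α)) := by rw [hCε]; field_simp
      _ ≤ ε * (α * σ i * exp (2 * d i * t)) := by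
        have hexp : Cε / α ≤ exp (2 * d i * t) :=
          (le_exp_log _).trans (exp_le_exp.2 (by nlinarith))
        have hCε0 : 0 ≤ Cε := hCε ▸ by positivity
        gcongr
        exact mul_nonneg hα.le (hσ i)
  · rw [if_neg hi, sub_zero]
    refine abs_logisticSol_le (mul_nonneg hα.le (hσ i)) ht ?_
    have hexp : exp (2 * d i * t) ≤ cε / α := by
      rw [← exp_log (div_pos (hα.trans_le hαcε) hα)]
      exact exp_le_exp.2 (by nlinarith [hnp i hi])
    calc α * σ i * exp (2 * d i * t) ≤ α * (⨆ j, σ j) * (cε / α) := by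
          gcongr
          exact hS i
      _ = ε := by rw [hcε]; field_simp

end ConjDiagonal

lemma one_div_two_mul_mul_le_iff {d L t : ℝ} (hd : 0 < d) :
    1 / (2 * d) * L ≤ t ↔ L ≤ 2 * d * t := by
  rw [one_div_mul_eq_div, div_le_iff₀' (by positivity)]

lemma le_one_div_two_mul_mul_iff {d L t : ℝ} (hd : 0 < d) :
    t ≤ 1 / (2 * d) * L ↔ 2 * d * t ≤ L := by
  rw [one_div_mul_eq_div, le_div_iff₀' (by positivity)]

lemma one_div_two_mul_mul_le_of_div_lt_div {d₁ d₂ L₁ L₂ : ℝ} (hd₁ : 0 < d₁) (hd₂ : 0 < d₂)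
    (hL₁ : 0 ≤ L₁) (h : d₂ / d₁ < L₂ / L₁) : 1 / (2 * d₁) * L₁ ≤ 1 / (2 * d₂) * L₂ := by
  rcases hL₁.eq_or_lt with rfl | hL₁
  · rw [div_zero] at h
    linarith [div_pos hd₂ hd₁]
  rw [div_lt_div_iff₀ hd₁ hL₁] at h
  rw [one_div_mul_eq_div, one_div_mul_eq_div, div_le_div_iff₀ (by positivity) (by positivity)]
  nlinarith

lemma div_le_sq_div_mul {ε S D m : ℝ} (hε : 0 < ε) (hm : 0 < m) (hmS : m ≤ S) (hεD : ε ≤ D) :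
    ε / S ≤ D ^ 2 / (ε * m) := by
  rw [div_le_div_iff₀ (hm.trans_le hmS) (mul_pos hε hm)]
  nlinarith [mul_le_mul (mul_le_mul hεD hεD hε.le (hε.le.trans hεD)) hmS hm.le
    (mul_self_nonneg D)]

lemma Fin.ciInf_castLE_le {n K : ℕ} (hKn : K ≤ n) (f : Fin n → ℝ) {i : Fin n} (hi : i.val < K) :
    ⨅ j : Fin K, f (Fin.castLE hKn j) ≤ f i :=
  ciInf_le (Finite.bddBelow_range _) (⟨i, hi⟩ : Fin K)

lemma Fin.ciInf_castLE_pos {n K : ℕ} (hK : 0 < K) (hKn : K ≤ n) {f : Fin n → ℝ}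
    (hf : ∀ i : Fin n, i.val < K → 0 < f i) : 0 < ⨅ j : Fin K, f (Fin.castLE hKn j) := by
  have : Nonempty (Fin K) := ⟨⟨0, hK⟩⟩
  obtain ⟨j, hj⟩ := exists_eq_ciInf_of_finite (f := fun j : Fin K => f (Fin.castLE hKn j))
  exact hj ▸ hf _ j.isLt

lemma antitone_of_pos_of_eq_zero {n K : ℕ} {d : Fin n → ℝ}
    (hpos : ∀ i : Fin n, i.val < K → 0 < d i) (hzero : ∀ i : Fin n, K ≤ i.val → d i = 0)
    (hdec : ∀ i j : Fin n, i < j → j.val < K → d j < d i) : Antitone d := by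
  intro i j hij
  rcases hij.eq_or_lt with rfl | hij
  · rfl
  by_cases hj : j.val < K
  · exact (hdec i j hij hj).le
  rw [hzero j (not_lt.1 hj)]
  by_cases hi : i.val < K
  · exact (hpos i hi).le
  · exact (hzero i (not_lt.1 hi)).ge

/-- **Incremental learning under small spectral initialization (Theorem 1).**
`Y = Φ diag(d) Φᵀ` is PSD with `K` distinct nonzero eigenvalues
`d₀ > d₁ > ⋯ > d_{K-1} > 0` (0-indexed; `d i = 0` for `i ≥ K`). `W` solves
`Ẇ = WY + YW - 2W²` from the spectral initialization `W(0) = α Φ diag(σ₀) Φᵀ` with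
`σ₀ᵢ > 0` for `i < K`. For `0 < ε ≤ d_{K-1}`, `c_ε = ε / max_i σ₀ᵢ`,
`C_ε = d₀² / (ε · min_{i < K} σ₀ᵢ)`, if `α ≤ c_ε` and
`(-log α + log c_ε)/(-log α + log C_ε) > d_{k+1}/d_k` for all `k + 1 < K`, then for each
`k < K` the interval `I_{k+1} = [(1/(2 d_k)) log(C_ε/α), (1/(2 d_{k+1})) log(c_ε/α)]`
(right endpoint `+∞` when `k + 1 = K`) is non-empty, and on it
`‖W(t) - Ŷ_{k+1}‖ ≤ ε` in spectral norm, where `Ŷ_{k+1} = Φ diag(d₀,…,d_k,0,…,0) Φᵀ`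
is the best rank-`(k+1)` approximation of `Y`. -/
theorem incremental_learning_spectral_initialization
    (n K : ℕ) (hK : 0 < K) (hKn : K ≤ n)
    (Φ : Matrix (Fin n) (Fin n) ℝ) (hΦ : Φ * Φᵀ = 1 ∧ Φᵀ * Φ = 1)
    (d : Fin n → ℝ)
    (hdpos : ∀ i : Fin n, i.val < K → 0 < d i)
    (hdzero : ∀ i : Fin n, K ≤ i.val → d i = 0)
    (hddec : ∀ i j : Fin n, i < j → j.val < K → d j < d i)
    (Y : Matrix (Fin n) (Fin n) ℝ) (hY : Y = Φ * Matrix.diagonal d * Φᵀ)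
    (σ0 : Fin n → ℝ) (hσ0 : ∀ i, 0 ≤ σ0 i)
    (hσ0K : ∀ i : Fin n, i.val < K → 0 < σ0 i)
    (α : ℝ) (hα : 0 < α)
    (W : ℝ → Matrix (Fin n) (Fin n) ℝ)
    (hW0 : W 0 = α • (Φ * Matrix.diagonal σ0 * Φᵀ))
    (hWd : ∀ t : ℝ, 0 ≤ t →
      HasDerivWithinAt W (W t * Y + Y * W t - 2 * (W t * W t)) (Set.Ici 0) t)
    (ε : ℝ) (hε : 0 < ε) (hεK : ε ≤ d ⟨K - 1, by omega⟩)
    (cε Cε : ℝ)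
    (hcε : cε = ε / (⨆ i, σ0 i))
    (hCε : Cε = (d ⟨0, by omega⟩) ^ 2 / (ε * ⨅ i : Fin K, σ0 (Fin.castLE hKn i)))
    (hαcε : α ≤ cε)
    (hsep : ∀ (k : ℕ) (hk : k + 1 < K),
      (-Real.log α + Real.log cε) / (-Real.log α + Real.log Cε) >
        d ⟨k + 1, by omega⟩ / d ⟨k, by omega⟩) :
    ∀ (k : ℕ) (hk : k < K),
      (if h : k + 1 < K then
        Set.Icc (1 / (2 * d ⟨k, by omega⟩) * Real.log (Cε / α))
          (1 / (2 * d ⟨k + 1, by omega⟩) * Real.log (cε / α))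
      else
        Set.Ici (1 / (2 * d ⟨k, by omega⟩) * Real.log (Cε / α))).Nonempty ∧
      ∀ t ∈ (if h : k + 1 < K then
        Set.Icc (1 / (2 * d ⟨k, by omega⟩) * Real.log (Cε / α))
          (1 / (2 * d ⟨k + 1, by omega⟩) * Real.log (cε / α))
      else
        Set.Ici (1 / (2 * d ⟨k, by omega⟩) * Real.log (Cε / α))),
        ‖W t - Φ * Matrix.diagonal (fun i => if i.val ≤ k then d i else 0) * Φᵀ‖ ≤ ε := by
  intro k hk
  have hd : Antitone d := antitone_of_pos_of_eq_zero hdpos hdzero hddec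
  have hΦU : Φ ∈ unitaryGroup (Fin n) ℝ :=
    mem_unitaryGroup_iff.2 (by simpa [star_eq_conjTranspose] using hΦ.1)
  have hW := eqOn_conj_diagonal_logisticSol hΦU (d := d) (W := W)
    (fun i => mul_nonneg hα.le (hσ0 i))
    (by rw [hW0, show (fun i => α * σ0 i) = α • σ0 from rfl, diagonal_smul,
      Matrix.mul_smul, Matrix.smul_mul])
    (by subst hY; exact hWd)
  have hm := Fin.ciInf_castLE_pos hK hKn hσ0K
  have hd0 : ∀ i : Fin n, d i ≤ d ⟨0, by omega⟩ := fun i => hd (Fin.le_def.2 (Nat.zero_le _))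
  have hcεCε : cε ≤ Cε := hcε ▸ hCε ▸ div_le_sq_div_mul hε hm
    ((Fin.ciInf_castLE_le hKn σ0 (i := ⟨0, by omega⟩) hK).trans
      (le_ciSup (Finite.bddAbove_range σ0) _)) (hεK.trans (hd0 _))
  have hlogC : 0 ≤ log (Cε / α) := log_nonneg ((one_le_div hα).2 (hαcε.trans hcεCε))
  have hdk : 0 < d ⟨k, hk.trans_le hKn⟩ := hdpos _ hk
  have hwindow : ∀ ρ₂ t, log (Cε / α) ≤ 2 * d ⟨k, hk.trans_le hKn⟩ * t →
      (∀ i : Fin n, ¬ i.val ≤ k → d i ≤ ρ₂) → 2 * ρ₂ * t ≤ log (cε / α) →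
      ‖W t - Φ * diagonal (fun i => if i.val ≤ k then d i else 0) * Φᵀ‖ ≤ ε := by
    intro ρ₂ t hleft hnp hright
    have ht : 0 ≤ t := nonneg_of_mul_nonneg_right (hlogC.trans hleft) (by positivity)
    rw [hW ht]
    exact norm_conj_logisticSol_sub_le hΦU (fun i : Fin n => i.val ≤ k) hα hε hm ht hσ0
      (fun i hi => ⟨Fin.ciInf_castLE_le hKn σ0 (by omega),
        hεK.trans (hd (Fin.le_def.2 (by simp; omega))), hd (Fin.le_def.2 hi), hd0 i⟩)
      hnp hcε hCε hαcε hleft hright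
  split_ifs with hk1
  · have hdk1 := hdpos ⟨k + 1, by omega⟩ hk1
    refine ⟨nonempty_Icc.2 ?_, fun t ht => hwindow _ t ((one_div_two_mul_mul_le_iff hdk).1 ht.1)
      (fun i hi => hd (Fin.le_def.2 (by simp; omega))) ((le_one_div_two_mul_mul_iff hdk1).1 ht.2)⟩
    have hsepk := hsep k hk1
    rw [neg_add_eq_sub, neg_add_eq_sub, ← log_div (hα.trans_le hαcε).ne' hα.ne',
      ← log_div (hα.trans_le (hαcε.trans hcεCε)).ne' hα.ne'] at hsepk
    exact one_div_two_mul_mul_le_of_div_lt_div hdk hdk1 hlogC hsepk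
  · refine ⟨nonempty_Ici, fun t ht => hwindow 0 t ((one_div_two_mul_mul_le_iff hdk).1 ht)
      (fun i hi => (hdzero i (by omega)).le) ?_⟩
    simpa using log_nonneg ((one_le_div hα).2 hαcε)
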